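/- Let n ≥ 1 and let K be a symmetric n×n integer matrix with K_{ij} ≤ 0 for all i ≠ j and with every row sum ∑_j K_{ij} ≥ 0 (i.e., K is the Kirchhoff matrix of a quiver). Then for every 1 ≤ k ≤ n, the k-th smallest eigenvalue satisfies λ_k ≤ 2 d_k, where d_1 ≤ … ≤ d_n are the diagonal entries of K listed in increasing order. -/

import Mathlib

/-!
For a symmetric `A` with nonpositive off-diagonal entries and row sums `r i`,
`∑ i j, A i j (x i + x j)² / 2 = xᵀ A x + ∑ i, r i (x i)²`, and only the diagonal terms of the
left side can be positive; hence `xᵀ A x ≤ 2 ∑ i, A i i (x i)²` when all `r i ≥ 0`.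
On the vectors supported on the `k` vertices of smallest degree this is at most
`2 d_k ‖x‖²`. This `k`-dimensional space meets the span of the eigenvectors with eigenvalue
at least `λ_k`, which has dimension at least `n - k + 1`, and there `xᵀ A x ≥ λ_k ‖x‖²`
(the easy half of Courant–Fischer).
-/

open Matrix Finset Module Submodule

section QuadraticForm

variable {ι : Type*} [Fintype ι] {A : Matrix ι ι ℝ}

theorem Matrix.IsSymm.dotProduct_mulVec_add_sum_rowSum_mul_sq (hA : A.IsSymm) (x : ι → ℝ) :
    x ⬝ᵥ A *ᵥ x + ∑ i, (∑ j, A i j) * x i ^ 2 = ∑ i, ∑ j, A i j * (x i + x j) ^ 2 / 2 := by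
  have hswap : ∑ i, ∑ j, A i j * x j ^ 2 = ∑ i, ∑ j, A i j * x i ^ 2 := by
    rw [Finset.sum_comm]
    simp_rw [hA.apply]
  have hexpand : ∑ i, ∑ j, A i j * (x i + x j) ^ 2 / 2 = ∑ i, ∑ j, x i * (A i j * x j)
      + (∑ i, ∑ j, A i j * x i ^ 2) / 2 + (∑ i, ∑ j, A i j * x j ^ 2) / 2 := by
    simp only [Finset.sum_div, ← Finset.sum_add_distrib]
    exact Finset.sum_congr rfl fun i _ => Finset.sum_congr rfl fun j _ => by ring
  rw [hexpand, hswap]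
  simp only [dotProduct, mulVec, Finset.mul_sum, Finset.sum_mul]
  ring

theorem Matrix.IsSymm.dotProduct_mulVec_add_sum_rowSum_mul_sq_le (hA : A.IsSymm)
    (hoff : ∀ i j, i ≠ j → A i j ≤ 0) (x : ι → ℝ) :
    x ⬝ᵥ A *ᵥ x + ∑ i, (∑ j, A i j) * x i ^ 2 ≤ 2 * ∑ i, A i i * x i ^ 2 := by
  classical
  rw [hA.dotProduct_mulVec_add_sum_rowSum_mul_sq, Finset.mul_sum]
  refine Finset.sum_le_sum fun i _ => ?_
  rw [← Finset.add_sum_erase _ _ (Finset.mem_univ i)]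
  have hrest : ∑ j ∈ univ.erase i, A i j * (x i + x j) ^ 2 / 2 ≤ 0 :=
    Finset.sum_nonpos fun j hj =>
      div_nonpos_of_nonpos_of_nonneg
        (mul_nonpos_of_nonpos_of_nonneg (hoff i j (Finset.ne_of_mem_erase hj).symm) (sq_nonneg _))
        zero_le_two
  linarith

theorem Matrix.IsSymm.dotProduct_mulVec_le_two_mul_sum_diag_mul_sq (hA : A.IsSymm)
    (hoff : ∀ i j, i ≠ j → A i j ≤ 0) (hrow : ∀ i, 0 ≤ ∑ j, A i j) (x : ι → ℝ) :
    x ⬝ᵥ A *ᵥ x ≤ 2 * ∑ i, A i i * x i ^ 2 := by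
  have := hA.dotProduct_mulVec_add_sum_rowSum_mul_sq_le hoff x
  have : 0 ≤ ∑ i, (∑ j, A i j) * x i ^ 2 :=
    Finset.sum_nonneg fun i _ => mul_nonneg (hrow i) (sq_nonneg _)
  linarith

end QuadraticForm

namespace Tuple

variable {α : Type*} [LinearOrder α] {n : ℕ}

theorem lt_card_filter_le_sort (f : Fin n → α) (k : Fin n) :
    (k : ℕ) < #{i | f i ≤ f (sort f k)} := by
  calc (k : ℕ) < #(Iic k) := by rw [Fin.card_Iic]; omega
    _ = #((Iic k).map (sort f).toEmbedding) := (card_map _).symm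
    _ ≤ #{i | f i ≤ f (sort f k)} := card_le_card fun i hi => by
        obtain ⟨m, hm, rfl⟩ := mem_map.mp hi
        simpa using monotone_sort f (mem_Iic.mp hm)

theorem sub_le_card_filter_sort_le (f : Fin n → α) (k : Fin n) :
    n - k ≤ #{i | f (sort f k) ≤ f i} := by
  calc n - k = #((Ici k).map (sort f).toEmbedding) := by rw [card_map, Fin.card_Ici]
    _ ≤ #{i | f (sort f k) ≤ f i} := card_le_card fun i hi => by
        obtain ⟨m, hm, rfl⟩ := mem_map.mp hi
        simpa using monotone_sort f (mem_Ici.mp hm)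

end Tuple

namespace OrthonormalBasis

variable {ι 𝕜 E : Type*} [Fintype ι] [RCLike 𝕜] [NormedAddCommGroup E] [InnerProductSpace 𝕜 E]

theorem repr_apply_eq_zero_of_mem_span_image (b : OrthonormalBasis ι 𝕜 E) {s : Set ι} {x : E}
    (hx : x ∈ span 𝕜 (b '' s)) {i : ι} (hi : i ∉ s) : b.repr x i = 0 := by
  rw [← b.coe_toBasis, Basis.mem_span_image] at hx
  rw [← b.coe_toBasis_repr_apply]
  exact Finsupp.notMem_support_iff.mp fun h => hi (hx h)

theorem finrank_span_image (b : OrthonormalBasis ι 𝕜 E) (s : Finset ι) :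
    finrank 𝕜 (span 𝕜 (b '' s)) = #s := by
  classical
  have hli : LinearIndepOn 𝕜 id (b '' s) := (b.toBasis.linearIndependent.linearIndepOn _).id_image
  rw [← coe_image, finrank_span_finset_eq_card (coe_image (f := b) ▸ hli),
    card_image_of_injective _ b.orthonormal.linearIndependent.injective]

end OrthonormalBasis

section Spectral

variable {ι : Type*} [Fintype ι] [DecidableEq ι] {A : Matrix ι ι ℝ}

theorem Matrix.IsHermitian.dotProduct_mulVec_eq_sum_eigenvalues_mul_sq (hA : A.IsHermitian)
    (x : EuclideanSpace ℝ ι) :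
    x.ofLp ⬝ᵥ A *ᵥ x.ofLp = ∑ j, hA.eigenvalues j * hA.eigenvectorBasis.repr x j ^ 2 := by
  have hAu := hA.mulVec_eigenvectorBasis
  set u := hA.eigenvectorBasis
  have hcoord : ∀ j, x.ofLp ⬝ᵥ (u j).ofLp = u.repr x j := fun j => by
    rw [u.repr_apply_apply, EuclideanSpace.inner_eq_star_dotProduct, star_trivial,
      dotProduct_comm]
  have hAx : A *ᵥ x.ofLp = ∑ j, (u.repr x j * hA.eigenvalues j) • (u j).ofLp := by
    conv_lhs => rw [← u.sum_repr x]
    simp only [WithLp.ofLp_sum, WithLp.ofLp_smul, mulVec_sum, mulVec_smul,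
      hAu, smul_smul]
  simp only [hAx, dotProduct_sum, dotProduct_smul, hcoord, smul_eq_mul]
  exact Finset.sum_congr rfl fun j _ => by ring

theorem Matrix.IsHermitian.mul_norm_sq_le_dotProduct_mulVec (hA : A.IsHermitian) {μ : ℝ}
    {x : EuclideanSpace ℝ ι} (hμ : ∀ j, hA.eigenvectorBasis.repr x j ≠ 0 → μ ≤ hA.eigenvalues j) :
    μ * ‖x‖ ^ 2 ≤ x.ofLp ⬝ᵥ A *ᵥ x.ofLp := by
  rw [hA.dotProduct_mulVec_eq_sum_eigenvalues_mul_sq, ← hA.eigenvectorBasis.sum_sq_inner_right,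
    Finset.mul_sum]
  refine Finset.sum_le_sum fun j _ => ?_
  rw [← hA.eigenvectorBasis.repr_apply_apply]
  by_cases hj : hA.eigenvectorBasis.repr x j = 0
  · simp [hj]
  · exact mul_le_mul_of_nonneg_right (hμ j hj) (sq_nonneg _)

end Spectral

theorem Submodule.exists_mem_mem_ne_zero_of_finrank_lt_add {K V : Type*} [DivisionRing K]
    [AddCommGroup V] [Module K V] [FiniteDimensional K V] {s t : Submodule K V}
    (h : finrank K V < finrank K s + finrank K t) : ∃ x ∈ s, x ∈ t ∧ x ≠ 0 := by
  have hinf : 0 < finrank K ↥(s ⊓ t) := by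
    have := (s ⊔ t).finrank_le
    have := s.finrank_sup_add_finrank_inf_eq t
    omega
  obtain ⟨x, hx, hx0⟩ := (Submodule.ne_bot_iff _).mp (Submodule.one_le_finrank_iff.mp hinf)
  exact ⟨x, hx.1, hx.2, hx0⟩

theorem Matrix.IsHermitian.exists_sortedEigenvalue_mul_norm_sq_le {n : ℕ}
    {A : Matrix (Fin n) (Fin n) ℝ} (hA : A.IsHermitian) (k : Fin n)
    {V : Submodule ℝ (EuclideanSpace ℝ (Fin n))} (hV : (k : ℕ) < finrank ℝ V) :
    ∃ x ∈ V, x ≠ 0 ∧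
      (hA.eigenvalues ∘ Tuple.sort hA.eigenvalues) k * ‖x‖ ^ 2 ≤ x.ofLp ⬝ᵥ A *ᵥ x.ofLp := by
  set μ := (hA.eigenvalues ∘ Tuple.sort hA.eigenvalues) k
  let W := span ℝ (hA.eigenvectorBasis '' ({j | μ ≤ hA.eigenvalues j} : Finset (Fin n)))
  have hW : n - k ≤ finrank ℝ W := by
    rw [OrthonormalBasis.finrank_span_image]
    exact Tuple.sub_le_card_filter_sort_le hA.eigenvalues k
  obtain ⟨x, hxV, hxW, hx0⟩ := Submodule.exists_mem_mem_ne_zero_of_finrank_lt_add (s := V) (t := W)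
    (by rw [finrank_euclideanSpace_fin]; omega)
  refine ⟨x, hxV, hx0, hA.mul_norm_sq_le_dotProduct_mulVec fun j hj => ?_⟩
  by_contra hlt
  exact hj (hA.eigenvectorBasis.repr_apply_eq_zero_of_mem_span_image hxW (by simpa using hlt))

theorem EuclideanSpace.sum_mul_sq_le_of_mem_span_basisFun {ι : Type*} [Fintype ι] {s : Set ι}
    {x : EuclideanSpace ℝ ι} (hx : x ∈ span ℝ (EuclideanSpace.basisFun ι ℝ '' s)) {f : ι → ℝ}
    {c : ℝ} (hf : ∀ i ∈ s, f i ≤ c) : ∑ i, f i * x i ^ 2 ≤ c * ‖x‖ ^ 2 := by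
  rw [EuclideanSpace.norm_sq_eq, Finset.mul_sum]
  refine Finset.sum_le_sum fun i _ => ?_
  by_cases hi : i ∈ s
  · simpa using mul_le_mul_of_nonneg_right (hf i hi) (sq_nonneg (x i))
  · have hxi : x i = 0 := by
      simpa using (EuclideanSpace.basisFun ι ℝ).repr_apply_eq_zero_of_mem_span_image hx hi
    simp [hxi]

/-- If `K` is the Kirchhoff matrix of a quiver (symmetric integer matrix with
nonpositive off-diagonal entries and nonnegative row sums) on `n ≥ 1` vertices,
then the `k`-th smallest eigenvalue satisfies `λ_k ≤ 2 d_k`, where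
`d_1 ≤ ⋯ ≤ d_n` are the sorted diagonal entries. -/
theorem quiver_eigenvalue_le_two_deg
    (n : ℕ) (K : Matrix (Fin n) (Fin n) ℤ)
    (hoff : ∀ i j : Fin n, i ≠ j → K i j ≤ 0)
    (hrow : ∀ i : Fin n, 0 ≤ ∑ j, K i j)
    (hK : (K.map (Int.cast : ℤ → ℝ)).IsHermitian)
    (lam : Fin n → ℝ)
    (hlam : lam = hK.eigenvalues ∘ Tuple.sort hK.eigenvalues)
    (d : Fin n → ℤ)
    (hd : d = (fun i => K i i) ∘ Tuple.sort (fun i => K i i)) :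
    ∀ (k : ℕ) (hk1 : 1 ≤ k) (hkn : k ≤ n),
      lam ⟨k - 1, by omega⟩ ≤ 2 * (d ⟨k - 1, by omega⟩ : ℝ) := by
  intro k hk1 hkn
  subst hlam hd
  set κ : Fin n := ⟨k - 1, by omega⟩
  set dκ := ((fun i => K i i) ∘ Tuple.sort (fun i => K i i)) κ
  set A := K.map (Int.cast : ℤ → ℝ)
  let lowDegree : Finset (Fin n) := {i | K i i ≤ dκ}
  obtain ⟨x, hxV, hx0, hlow⟩ := hK.exists_sortedEigenvalue_mul_norm_sq_le κ
    (V := span ℝ (EuclideanSpace.basisFun (Fin n) ℝ '' lowDegree))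
    (by rw [OrthonormalBasis.finrank_span_image]; exact Tuple.lt_card_filter_le_sort _ κ)
  have hquad : x.ofLp ⬝ᵥ A *ᵥ x.ofLp ≤ 2 * ∑ i, A i i * x i ^ 2 :=
    (isHermitian_iff_isSymm.mp hK).dotProduct_mulVec_le_two_mul_sum_diag_mul_sq
      (fun i j hij => by simpa [A] using hoff i j hij)
      (fun i => by simp only [A, map_apply]; exact_mod_cast hrow i) x
  have hdiag : ∑ i, A i i * x i ^ 2 ≤ dκ * ‖x‖ ^ 2 :=
    EuclideanSpace.sum_mul_sq_le_of_mem_span_basisFun hxV fun i hi =>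
      Int.cast_le.mpr (by simpa [lowDegree] using hi)
  exact le_of_mul_le_mul_right (by linarith) (by positivity : 0 < ‖x‖ ^ 2)
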